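/- Let T and T' be NBC spanning trees of G, let S be a set of edges with IN(T) ⊆ S ⊆ E(T), and let e be an edge with e ∉ S such that IN(T') ⊆ S ∪ {e} ⊆ E(T'). Then T ≤ T' in the lexicographic order. -/

import Mathlib

open SimpleGraph

attribute [-instance] Sym2.instPartialOrder

variable {V : Type*}

/-- `T` is a spanning tree of `G`: a subgraph of `G` (on the same vertex set) that is a tree. -/
def IsSpanningTree (G T : SimpleGraph V) : Prop :=
  T ≤ G ∧ T.IsTree

/-- `cutset G T e`: the set of edges of `G` whose endpoints lie in the two different
components of `T` with the edge `e` deleted. -/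
def cutset (G T : SimpleGraph V) (e : Sym2 V) : Set (Sym2 V) :=
  {f | f ∈ G.edgeSet ∧ ∀ u v : V, f = s(u, v) → ¬ (T.deleteEdges {e}).Reachable u v}

/-- `cycset T f`: the edge set of the unique cycle of `T` with the edge `f` added
(an edge of the unicyclic connected graph `T + f` lies on the cycle iff deleting it
keeps the graph connected). -/
def cycset (T : SimpleGraph V) (f : Sym2 V) : Set (Sym2 V) :=
  {e | e ∈ (T ⊔ fromEdgeSet {f}).edgeSet ∧
    ((T ⊔ fromEdgeSet {f}).deleteEdges {e}).Connected}

/-- An edge `e` of `T` is internally active if it is the minimum of `cutset G T e`. -/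
def InternallyActive [LinearOrder (Sym2 V)] (G T : SimpleGraph V) (e : Sym2 V) : Prop :=
  e ∈ T.edgeSet ∧ ∀ f ∈ cutset G T e, e ≤ f

/-- `IN G T`: the set of internally inactive edges of `T`. -/
def IN [LinearOrder (Sym2 V)] (G T : SimpleGraph V) : Set (Sym2 V) :=
  {e | e ∈ T.edgeSet ∧ ¬ InternallyActive G T e}

/-- `C` is the edge set of some cycle of `G`. -/
def IsCycleEdgeSet (G : SimpleGraph V) (C : Set (Sym2 V)) : Prop :=
  ∃ (v : V) (w : G.Walk v v), w.IsCycle ∧ C = {e | e ∈ w.edges}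

/-- A broken circuit: the edge set of a cycle with its minimum edge removed. -/
def IsBrokenCircuit [LinearOrder (Sym2 V)] (G : SimpleGraph V) (B : Set (Sym2 V)) : Prop :=
  ∃ (C : Set (Sym2 V)) (e : Sym2 V),
    IsCycleEdgeSet G C ∧ e ∈ C ∧ (∀ f ∈ C, e ≤ f) ∧ B = C \ {e}

/-- A set of edges is NBC if it contains no broken circuit. -/
def IsNBC [LinearOrder (Sym2 V)] (G : SimpleGraph V) (S : Set (Sym2 V)) : Prop :=
  ∀ B : Set (Sym2 V), IsBrokenCircuit G B → ¬ B ⊆ S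

/-- `T` is an NBC spanning tree of `G`. -/
def IsNBCSpanningTree [LinearOrder (Sym2 V)] (G T : SimpleGraph V) : Prop :=
  IsSpanningTree G T ∧ IsNBC G T.edgeSet

/-- The edge set of `T` written as a list in increasing order. -/
noncomputable def edgeList [Fintype V] [LinearOrder (Sym2 V)] (T : SimpleGraph V) :
    List (Sym2 V) :=
  (Set.toFinite T.edgeSet).toFinset.sort (· ≤ ·)

/-- Lexicographic order on spanning trees via their sorted edge lists. -/
def treeLexLT [Fintype V] [LinearOrder (Sym2 V)] (T T' : SimpleGraph V) : Prop :=
  List.Lex (· < ·) (edgeList T) (edgeList T')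

section Aux

open SimpleGraph

private lemma sorted_lex_of_min {α : Type*} [LinearOrder α] {a : α} :
    ∀ (l₁ l₂ : List α), l₁.Pairwise (· < ·) → l₂.Pairwise (· < ·) →
    l₁.length = l₂.length → a ∈ l₁ → a ∉ l₂ →
    (∀ x ∈ l₁, x ∉ l₂ → a ≤ x) → (∀ x ∈ l₂, x ∉ l₁ → a ≤ x) →
    List.Lex (· < ·) l₁ l₂
  | [], _, _, _, _, ha, _, _, _ => absurd ha (List.not_mem_nil (a := a))
  | _ :: _, [], _, _, hlen, _, _, _, _ => by simp at hlen
  | x :: xs, y :: ys, h₁, h₂, hlen, ha, ha', h3, h4 => by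
    obtain ⟨hx1, hx2⟩ := List.pairwise_cons.mp h₁
    obtain ⟨hy1, hy2⟩ := List.pairwise_cons.mp h₂
    rcases lt_trichotomy x y with h | h | h
    · exact List.Lex.rel h
    · subst h
      have hax : a ≠ x := fun hax => ha' (hax ▸ List.mem_cons_self (a := x) (l := ys))
      have haxs : a ∈ xs := (List.mem_cons.mp ha).resolve_left hax
      refine List.Lex.cons (sorted_lex_of_min xs ys hx2 hy2 (by simpa using hlen)
        haxs (fun hys => ha' (List.mem_cons_of_mem _ hys)) ?_ ?_)
      · intro z hz hz'
        exact h3 z (List.mem_cons_of_mem _ hz)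
          (fun hzy => (List.mem_cons.mp hzy).elim
            (fun hzx => absurd (hzx ▸ hx1 z hz) (lt_irrefl x)) hz')
      · intro z hz hz'
        exact h4 z (List.mem_cons_of_mem _ hz)
          (fun hzy => (List.mem_cons.mp hzy).elim
            (fun hzx => absurd (hzx ▸ hy1 z hz) (lt_irrefl x)) hz')
    · -- y < x : impossible
      have hy : y ∉ x :: xs := by
        intro hy
        rcases List.mem_cons.mp hy with rfl | hy
        · exact lt_irrefl _ h
        · exact absurd (hx1 y hy) (not_lt_of_gt h)
      have hay : a ≤ y := h4 y (List.mem_cons_self (a := y) (l := ys)) hy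
      have hxa : x ≤ a := by
        rcases List.mem_cons.mp ha with rfl | ha
        · exact le_refl _
        · exact le_of_lt (hx1 a ha)
      exact absurd (lt_of_le_of_lt (hxa.trans hay) h) (lt_irrefl x)

private lemma not_reachable_deleteEdges {V : Type*} {T : SimpleGraph V} (hT : T.IsAcyclic)
    {u v : V} (p : T.Walk u v) (hp : p.IsPath) {b : Sym2 V} (hb : b ∈ p.edges) :
    ¬ (T.deleteEdges {b}).Reachable u v := by
  classical
  rintro ⟨w⟩
  have hle : T.deleteEdges {b} ≤ T := T.deleteEdges_le {b}
  set q : (T.deleteEdges {b}).Path u v := w.toPath with hqdef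
  have hq : ∀ e ∈ (q : (T.deleteEdges {b}).Walk u v).edges, e ∈ T.edgeSet :=
    fun e he => (edgeSet_mono hle) ((q : (T.deleteEdges {b}).Walk u v).edges_subset_edgeSet he)
  have huniq := isAcyclic_iff_path_unique.mp hT ⟨p, hp⟩
    ⟨(q : (T.deleteEdges {b}).Walk u v).transfer T hq, q.2.transfer hq⟩
  have hpe : p = (q : (T.deleteEdges {b}).Walk u v).transfer T hq := congrArg Subtype.val huniq
  rw [hpe, SimpleGraph.Walk.edges_transfer] at hb
  have : b ∈ (T.deleteEdges {b}).edgeSet :=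
    (q : (T.deleteEdges {b}).Walk u v).edges_subset_edgeSet hb
  rw [edgeSet_deleteEdges] at this
  exact this.2 rfl

private lemma min_diff_false {V : Type*} [LinearOrder (Sym2 V)] {G T T' : SimpleGraph V}
    (hT'G : T' ≤ G) (hTt : T.IsTree) (hT't : T'.IsAcyclic)
    (hact : ∀ b ∈ T.edgeSet, b ∉ T'.edgeSet → InternallyActive G T b)
    {a : Sym2 V} (ha' : a ∈ T'.edgeSet) (ha : a ∉ T.edgeSet)
    (hmin : ∀ x, x ∈ T.edgeSet → x ∉ T'.edgeSet → a ≤ x) : False := by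
  classical
  revert ha' ha hmin
  induction a using Sym2.ind with
  | _ u v =>
    intro ha' ha hmin
    have hadj : T'.Adj u v := (T'.mem_edgeSet).mp ha'
    obtain ⟨w⟩ := hTt.isConnected.preconnected v u
    set p : T.Path v u := w.toPath with hpdef
    have hpe : s(u, v) ∉ (p : T.Walk v u).edges :=
      fun h => ha ((p : T.Walk v u).edges_subset_edgeSet h)
    by_cases hall : ∀ e ∈ (p : T.Walk v u).edges, e ∈ T'.edgeSet
    · -- build a cycle in T'
      refine hT't _ (SimpleGraph.Path.cons_isCycle
        ⟨(p : T.Walk v u).transfer T' hall, p.2.transfer hall⟩ hadj ?_)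
      show s(u, v) ∉ ((p : T.Walk v u).transfer T' hall).edges
      rwa [SimpleGraph.Walk.edges_transfer]
    · push_neg at hall
      obtain ⟨b, hbp, hb'⟩ := hall
      have hbT : b ∈ T.edgeSet := (p : T.Walk v u).edges_subset_edgeSet hbp
      have halb : s(u, v) < b := by
        refine lt_of_le_of_ne (hmin b hbT hb') ?_
        intro hba
        exact ha (hba ▸ hbT)
      have hIA := hact b hbT hb'
      have hcut : s(u, v) ∈ cutset G T b := by
        refine ⟨edgeSet_mono hT'G ha', ?_⟩
        intro x y hxy
        have hnr : ¬ (T.deleteEdges {b}).Reachable v u :=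
          not_reachable_deleteEdges hTt.IsAcyclic (p : T.Walk v u) p.2 hbp
        rcases Sym2.eq_iff.mp hxy with ⟨rfl, rfl⟩ | ⟨rfl, rfl⟩
        · exact fun hr => hnr hr.symm
        · exact hnr
      exact absurd (hIA.2 _ hcut) (not_le_of_gt halb)

end Aux

/-- if `T, T'` are NBC spanning trees, `IN(T) ⊆ S ⊆ E(T)`, `e ∉ S`, and
`IN(T') ⊆ S ∪ {e} ⊆ E(T')`, then `T ≤ T'` in the lexicographic order. -/
theorem interval_step_le
    {V : Type*} [Fintype V] [LinearOrder (Sym2 V)] (G : SimpleGraph V)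
    (hconn : G.Connected)
    (T T' : SimpleGraph V)
    (hT : IsNBCSpanningTree G T) (hT' : IsNBCSpanningTree G T')
    (S : Set (Sym2 V)) (hS1 : IN G T ⊆ S) (hS2 : S ⊆ T.edgeSet)
    (e : Sym2 V) (he : e ∉ S)
    (h1 : IN G T' ⊆ S ∪ {e}) (h2 : S ∪ {e} ⊆ T'.edgeSet) :
    T = T' ∨ treeLexLT T T' := by
  by_cases hTT : T = T'
  · exact Or.inl hTT
  right
  classical
  have hST' : S ⊆ T'.edgeSet := fun x hx => h2 (Or.inl hx)
  have hact : ∀ b ∈ T.edgeSet, b ∉ T'.edgeSet → InternallyActive G T b := by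
    intro b hb hb'
    by_contra hA
    exact hb' (hST' (hS1 ⟨hb, hA⟩))
  set sA : Finset (Sym2 V) := (Set.toFinite T.edgeSet).toFinset with hsA
  set sB : Finset (Sym2 V) := (Set.toFinite T'.edgeSet).toFinset with hsB
  have hmemA : ∀ x, x ∈ sA ↔ x ∈ T.edgeSet := fun x => Set.Finite.mem_toFinset _
  have hmemB : ∀ x, x ∈ sB ↔ x ∈ T'.edgeSet := fun x => Set.Finite.mem_toFinset _
  set D : Finset (Sym2 V) := (sA \ sB) ∪ (sB \ sA) with hD
  have hDne : D.Nonempty := by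
    rw [Finset.nonempty_iff_ne_empty]
    intro hemp
    apply hTT
    apply SimpleGraph.edgeSet_inj.mp
    ext x
    constructor
    · intro hx
      by_contra hx'
      have : x ∈ D := Finset.mem_union_left _
        (Finset.mem_sdiff.mpr ⟨(hmemA x).mpr hx, fun h => hx' ((hmemB x).mp h)⟩)
      rw [hemp] at this
      exact absurd this (Finset.notMem_empty x)
    · intro hx
      by_contra hx'
      have : x ∈ D := Finset.mem_union_right _
        (Finset.mem_sdiff.mpr ⟨(hmemB x).mpr hx, fun h => hx' ((hmemA x).mp h)⟩)
      rw [hemp] at this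
      exact absurd this (Finset.notMem_empty x)
  set a := D.min' hDne with haDef
  have haD : a ∈ D := D.min'_mem hDne
  have hmin : ∀ x ∈ D, a ≤ x := fun x hx => D.min'_le x hx
  have hminTT' : ∀ x, x ∈ T.edgeSet → x ∉ T'.edgeSet → a ≤ x := fun x h1 h2 =>
    hmin x (Finset.mem_union_left _ (Finset.mem_sdiff.mpr ⟨(hmemA x).mpr h1,
      fun h => h2 ((hmemB x).mp h)⟩))
  have hminT'T : ∀ x, x ∈ T'.edgeSet → x ∉ T.edgeSet → a ≤ x := fun x h1 h2 =>
    hmin x (Finset.mem_union_right _ (Finset.mem_sdiff.mpr ⟨(hmemB x).mpr h1,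
      fun h => h2 ((hmemA x).mp h)⟩))
  have haA : a ∈ T.edgeSet ∧ a ∉ T'.edgeSet := by
    rcases Finset.mem_union.mp haD with h | h
    · obtain ⟨h1, h2⟩ := Finset.mem_sdiff.mp h
      exact ⟨(hmemA a).mp h1, fun hh => h2 ((hmemB a).mpr hh)⟩
    · obtain ⟨h1, h2⟩ := Finset.mem_sdiff.mp h
      exact absurd (min_diff_false hT'.1.1 hT.1.2 hT'.1.2.IsAcyclic hact
        ((hmemB a).mp h1) (fun hh => h2 ((hmemA a).mpr hh)) hminTT') id
  -- card equality
  haveI : Fintype T.edgeSet := (Set.toFinite T.edgeSet).fintype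
  haveI : Fintype T'.edgeSet := (Set.toFinite T'.edgeSet).fintype
  have hcard : sA.card = sB.card := by
    have e1 : sA = T.edgeFinset := by
      ext x; rw [hmemA x, SimpleGraph.mem_edgeFinset]
    have e2 : sB = T'.edgeFinset := by
      ext x; rw [hmemB x, SimpleGraph.mem_edgeFinset]
    have c1 := hT.1.2.card_edgeFinset
    have c2 := hT'.1.2.card_edgeFinset
    rw [e1, e2]
    omega
  show List.Lex (· < ·) (edgeList T) (edgeList T')
  have hL1 : edgeList T = sA.sort (· ≤ ·) := rfl
  have hL2 : edgeList T' = sB.sort (· ≤ ·) := rfl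
  rw [hL1, hL2]
  refine sorted_lex_of_min (a := a) _ _ (List.sortedLT_iff_pairwise.mp (Finset.sortedLT_sort sA)) (List.sortedLT_iff_pairwise.mp (Finset.sortedLT_sort sB))
    (by rw [Finset.length_sort, Finset.length_sort, hcard]) ?_ ?_ ?_ ?_
  · exact (Finset.mem_sort _).mpr ((hmemA a).mpr haA.1)
  · intro h
    exact haA.2 ((hmemB a).mp ((Finset.mem_sort _).mp h))
  · intro x hx hx'
    exact hminTT' x ((hmemA x).mp ((Finset.mem_sort _).mp hx))
      (fun h => hx' ((Finset.mem_sort _).mpr ((hmemB x).mpr h)))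
  · intro x hx hx'
    exact hminT'T x ((hmemB x).mp ((Finset.mem_sort _).mp hx))
      (fun h => hx' ((Finset.mem_sort _).mpr ((hmemA x).mpr h)))
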